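/- (Cancellation identities F_{ℓ,p}) Let L be a Lie algebra with elements X_1,...,X_m. For any 2 ≤ ℓ, any 1 ≤ p ≤ ℓ-1, any word v of length ℓ, any word w with |w| ≥ 1, and any nonnegative integers b_1,...,b_p with b_1 + ⋯ + b_p ≥ 1: Σ_{σ ∈ S_ℓ} π_ℓ(σ) Σ_{1 ≤ i_1 < ⋯ < i_p ≤ ℓ} X_{σ_{i_p}(v)^{b_p} ⋯ σ_{i_2}(v)^{b_2} σ_{i_1}(v)^{b_1} w} = 0, where X_u denotes the left-nested bracket of the word u and σ_i(v)^b means the letter σ_i(v) repeated b times. -/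

import Mathlib

/-- The coefficient `π_ℓ` evaluated on the word `σ(1)σ(2)⋯σ(ℓ)` (letters `0,…,ℓ-1`),
defined inductively: value `1` on a single letter; if the word starts with the
smallest letter `0`, recurse on the remaining (shifted) word; if it ends with `0`,
recurse with a sign change; otherwise the value is `0`. -/
def piW : List ℕ → ℤ
  | [] => 0
  | [_] => 1
  | a :: b :: l =>
    if a = 0 then piW ((b :: l).map (· - 1))
    else if (a :: b :: l).getLast? = some 0 then
      - piW ((a :: b :: l).dropLast.map (· - 1))
    else 0
termination_by w => w.length
decreasing_by all_goals (simp; try omega)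

/-- `π_ℓ(σ)` for a permutation `σ` of `ℓ` letters. -/
def piPerm {ℓ : ℕ} (σ : Equiv.Perm (Fin ℓ)) : ℤ :=
  piW ((List.finRange ℓ).map (fun j => (σ j : ℕ)))

/-- Left-nested Lie bracket of a list: `[x₁,[x₂,…,[x_{k-1},x_k]…]]`. -/
def nestedBracket {L : Type*} [LieRing L] : List L → L
  | [] => 0
  | [x] => x
  | x :: y :: l => ⁅x, nestedBracket (y :: l)⁆

/-!
In an associative ring the left-nested bracket `⁅x₀, ⁅x₁, …, xₙ⁆⁆` expands as
`∑_σ π(σ) x_{σ 0} ⋯ x_{σ n}`: expanding the outer bracket puts `x₀` either first or last, which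
is exactly the recursion defining `π`.

Given positions `g 0, …, g (p-1)` among `ℓ > p` letters, specialise, in the monoid algebra of the
free monoid on `Fin p`, the letter at `g j` to the generator `j` and every other letter to `1`.
The bracket then vanishes, since it contains the central element `1`, and the coefficient of the
word `0 1 ⋯ (p-1)` shows that `∑ π(σ)` over the `σ` keeping `g 0, …, g (p-1)` in increasing order
is zero. Substituting `g = σ ∘ f` in `F_{ℓ,p}` and exchanging the two sums, every bracket is
multiplied by such a vanishing coefficient.
-/

open Equiv Finset

lemma piW_zero_cons (b : ℕ) (l : List ℕ) : piW (0 :: b :: l) = piW ((b :: l).map (· - 1)) := by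
  rw [piW, if_pos rfl]

lemma piW_append_zero {a : ℕ} (ha : a ≠ 0) (l : List ℕ) :
    piW ((a :: l) ++ [0]) = -piW ((a :: l).map (· - 1)) := by
  cases l with
  | nil => rw [List.cons_append, List.nil_append, piW, if_neg ha]; simp [piW]
  | cons b t =>
    rw [List.cons_append, List.cons_append, piW, if_neg ha, ← List.cons_append,
      ← List.cons_append, List.getLast?_concat, if_pos rfl, List.dropLast_concat]

lemma piW_eq_zero {a : ℕ} (ha : a ≠ 0) (b : ℕ) (l : List ℕ)
    (hl : (a :: b :: l).getLast? ≠ some 0) : piW (a :: b :: l) = 0 := by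
  rw [piW, if_neg ha, if_neg hl]

section Perm

variable {n : ℕ}

def permWord (σ : Perm (Fin n)) : List ℕ := List.ofFn fun i => (σ i : ℕ)

lemma piPerm_eq_piW_permWord (σ : Perm (Fin n)) : piPerm σ = piW (permWord σ) := by
  rw [piPerm, permWord, List.ofFn_eq_map]

def consZeroPerm (e : Perm (Fin n)) : Perm (Fin (n + 1)) := Perm.decomposeFin.symm (0, e)

def concatZeroPerm (e : Perm (Fin n)) : Perm (Fin (n + 1)) := consZeroPerm e * finRotate (n + 1)

@[simp] lemma consZeroPerm_zero (e : Perm (Fin n)) : consZeroPerm e 0 = 0 :=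
  Perm.decomposeFin_symm_apply_zero 0 e

@[simp] lemma consZeroPerm_succ (e : Perm (Fin n)) (i : Fin n) :
    consZeroPerm e i.succ = (e i).succ := by
  rw [consZeroPerm, Perm.decomposeFin_symm_apply_succ, swap_self, refl_apply]

@[simp] lemma concatZeroPerm_castSucc (e : Perm (Fin n)) (i : Fin n) :
    concatZeroPerm e i.castSucc = (e i).succ := by
  rw [concatZeroPerm, Perm.mul_apply, finRotate_apply, Fin.coeSucc_eq_succ, consZeroPerm_succ]

@[simp] lemma concatZeroPerm_last (e : Perm (Fin n)) : concatZeroPerm e (Fin.last n) = 0 := by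
  rw [concatZeroPerm, Perm.mul_apply, finRotate_last, consZeroPerm_zero]

lemma permWord_consZeroPerm (e : Perm (Fin n)) :
    permWord (consZeroPerm e) = 0 :: (permWord e).map (· + 1) := by
  simp [permWord, List.ofFn_succ, List.map_ofFn, Function.comp_def]

lemma permWord_concatZeroPerm (e : Perm (Fin n)) :
    permWord (concatZeroPerm e) = (permWord e).map (· + 1) ++ [0] := by
  rw [permWord, List.ofFn_succ', List.concat_eq_append]
  simp [permWord, List.map_ofFn, Function.comp_def]

lemma exists_permWord_eq_cons (e : Perm (Fin (n + 1))) :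
    ∃ c t, permWord e = c :: t := ⟨_, _, List.ofFn_succ⟩

lemma piPerm_consZeroPerm (e : Perm (Fin (n + 1))) : piPerm (consZeroPerm e) = piPerm e := by
  obtain ⟨c, t, h⟩ := exists_permWord_eq_cons e
  rw [piPerm_eq_piW_permWord, piPerm_eq_piW_permWord, permWord_consZeroPerm, h, List.map_cons,
    piW_zero_cons]
  simp [Function.comp_def]

lemma piPerm_concatZeroPerm (e : Perm (Fin (n + 1))) :
    piPerm (concatZeroPerm e) = -piPerm e := by
  obtain ⟨c, t, h⟩ := exists_permWord_eq_cons e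
  rw [piPerm_eq_piW_permWord, piPerm_eq_piW_permWord, permWord_concatZeroPerm, h, List.map_cons,
    piW_append_zero c.succ_ne_zero]
  simp [Function.comp_def]

lemma piPerm_eq_zero (σ : Perm (Fin (n + 2))) (h0 : σ 0 ≠ 0) (hlast : σ (Fin.last _) ≠ 0) :
    piPerm σ = 0 := by
  have hword : permWord σ =
      (σ 0 : ℕ) :: (σ 1 : ℕ) :: List.ofFn fun i : Fin n => (σ i.succ.succ : ℕ) := by
    simp [permWord, List.ofFn_succ]
  rw [piPerm_eq_piW_permWord, hword]
  refine piW_eq_zero (fun h => h0 (Fin.ext h)) _ _ ?_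
  rw [← hword, permWord, List.ofFn_succ', List.concat_eq_append, List.getLast?_concat]
  exact fun h => hlast (Fin.ext (Option.some.inj h))

lemma piPerm_fin_one (σ : Perm (Fin 1)) : piPerm σ = 1 := by
  rw [piPerm_eq_piW_permWord, permWord, List.ofFn_succ, List.ofFn_zero, piW]

end Perm

section Sum

variable {M : Type*} [AddCommMonoid M] {n : ℕ}

lemma sum_perm_ite_apply_zero_eq_sum_consZeroPerm (G : Perm (Fin (n + 1)) → M) :
    ∑ σ : Perm (Fin (n + 1)), (if σ 0 = 0 then G σ else 0) =
      ∑ e : Perm (Fin n), G (consZeroPerm e) := by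
  rw [← Perm.decomposeFin.symm.sum_comp, Fintype.sum_prod_type]
  simp [Perm.decomposeFin_symm_apply_zero, consZeroPerm]

lemma sum_perm_eq_sum_consZeroPerm_add_sum_concatZeroPerm (F : Perm (Fin (n + 2)) → M)
    (hF : ∀ σ : Perm (Fin (n + 2)), σ 0 ≠ 0 → σ (Fin.last _) ≠ 0 → F σ = 0) :
    ∑ σ, F σ = ∑ e, F (consZeroPerm e) + ∑ e, F (concatZeroPerm e) := by
  have hsplit (σ : Perm (Fin (n + 2))) :
      F σ = (if σ 0 = 0 then F σ else 0) + (if σ (Fin.last _) = 0 then F σ else 0) := by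
    by_cases h0 : σ 0 = 0
    · have hlast : σ (Fin.last _) ≠ 0 := fun h =>
        Fin.last_pos.ne' (σ.injective (h.trans h0.symm))
      simp [h0, hlast]
    · by_cases hlast : σ (Fin.last _) = 0
      · simp [h0, hlast]
      · simp [h0, hlast, hF σ h0 hlast]
  have hrotate : ∑ σ : Perm (Fin (n + 2)), (if σ (Fin.last _) = 0 then F σ else 0) =
      ∑ τ : Perm (Fin (n + 2)), if τ 0 = 0 then F (τ * finRotate _) else 0 :=
    (Fintype.sum_equiv (Equiv.mulRight (finRotate _)) _ _ fun τ => by simp).symm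
  rw [Fintype.sum_congr _ _ hsplit, sum_add_distrib, hrotate,
    sum_perm_ite_apply_zero_eq_sum_consZeroPerm, sum_perm_ite_apply_zero_eq_sum_consZeroPerm]
  rfl

end Sum

lemma nestedBracket_cons_of_ne_nil {L : Type*} [LieRing L] (a : L) {l : List L} (hl : l ≠ []) :
    nestedBracket (a :: l) = ⁅a, nestedBracket l⁆ := by
  obtain ⟨b, t, rfl⟩ := List.exists_cons_of_ne_nil hl
  rfl

lemma nestedBracket_eq_zero_of_central_mem {L : Type*} [LieRing L] {z : L}
    (hz : ∀ y : L, ⁅z, y⁆ = 0) :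
    ∀ {l : List L}, z ∈ l → 2 ≤ l.length → nestedBracket l = 0
  | [], _, h | [_], _, h => by simp at h
  | a :: b :: l, hmem, _ => by
    rw [nestedBracket]
    rcases List.mem_cons.1 hmem with rfl | hmem
    · exact hz _
    · cases l with
      | nil =>
        obtain rfl := List.mem_singleton.1 hmem
        rw [nestedBracket, ← lie_skew, hz, neg_zero]
      | cons c l => rw [nestedBracket_eq_zero_of_central_mem hz hmem (by simp), lie_zero]

lemma Function.partialInv_symm_comp {α β γ : Type*} (e : α ≃ β) {g : γ → β}
    (hg : Function.Injective g) :
    Function.partialInv (e.symm ∘ g) = Function.partialInv g ∘ e := by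
  funext a
  refine Option.ext fun j => ?_
  rw [(e.symm.injective.comp hg).isPartialInv, Function.comp_apply, Function.comp_apply,
    hg.isPartialInv, e.symm_apply_eq]

lemma List.filterMap_partialInv_finRange_eq_finRange_iff {p ℓ : ℕ} {h : Fin p → Fin ℓ}
    (hh : Function.Injective h) :
    (List.finRange ℓ).filterMap (Function.partialInv h) = List.finRange p ↔ StrictMono h := by
  set M := (List.finRange ℓ).filterMap (Function.partialInv h)
  have hmem (a : Fin ℓ) (j : Fin p) : Function.partialInv h a = some j ↔ h j = a :=
    hh.isPartialInv j a
  have hperm : M.Perm (List.finRange p) := by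
    refine (List.perm_ext_iff_of_nodup ?_ (List.nodup_finRange p)).2 fun j => ?_
    · exact (List.nodup_finRange ℓ).filterMap fun a a' j ha ha' =>
        ((hmem a j).1 ha).symm.trans ((hmem a' j).1 ha')
    · simpa [M, List.mem_filterMap] using ⟨h j, (hmem _ _).2 rfl⟩
  have hsorted : M.Pairwise (· < ·) ↔ StrictMono h := by
    rw [List.pairwise_filterMap, ← List.ofFn_id, List.pairwise_ofFn]
    simp only [id]
    constructor
    · intro H j j' hjj'
      by_contra! hle
      rcases hle.lt_or_eq with hlt | heq
      · exact (H hlt j' ((hmem _ _).2 rfl) j ((hmem _ _).2 rfl)).asymm hjj'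
      · exact hjj'.ne (hh heq).symm
    · rintro H a a' haa' j hj j' hj'
      rw [hmem] at hj hj'
      subst hj hj'
      exact H.lt_iff_lt.1 haa'
  constructor
  · intro hM
    rw [← hsorted, hM]
    exact List.pairwise_lt_finRange p
  · intro hmono
    exact hperm.eq_of_pairwise' (hsorted.2 hmono) (List.pairwise_lt_finRange p)

noncomputable def preimageWord {p ℓ : ℕ} (g : Fin p → Fin ℓ) (a : Fin ℓ) : FreeMonoid (Fin p) :=
  FreeMonoid.ofList (Function.partialInv g a).toList

lemma prod_preimageWord_eq_iff {p ℓ : ℕ} {g : Fin p → Fin ℓ} (hg : Function.Injective g)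
    (σ : Perm (Fin ℓ)) :
    (List.ofFn fun i => preimageWord g (σ i)).prod = FreeMonoid.ofList (List.finRange p) ↔
      StrictMono (σ.symm ∘ g) := by
  rw [← FreeMonoid.toList.injective.eq_iff, FreeMonoid.toList_prod, FreeMonoid.toList_ofList,
    ← List.filterMap_partialInv_finRange_eq_finRange_iff (σ.symm.injective.comp hg),
    Function.partialInv_symm_comp σ hg, List.filterMap_eq_flatMap_toList, List.flatMap,
    List.map_ofFn, List.ofFn_eq_map]
  rfl

section AssociativeRing

attribute [local instance] LieRing.ofAssociativeRing

theorem nestedBracket_ofFn_eq_sum_perm {R : Type*} [Ring R] :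
    ∀ {n : ℕ} (x : Fin (n + 1) → R), nestedBracket (List.ofFn x) =
      ∑ σ : Perm (Fin (n + 1)), piPerm σ • (List.ofFn fun i => x (σ i)).prod
  | 0, x => by simp [piPerm_fin_one, nestedBracket]
  | n + 1, x => by
    rw [sum_perm_eq_sum_consZeroPerm_add_sum_concatZeroPerm _
      fun σ h0 hlast => by rw [piPerm_eq_zero σ h0 hlast, zero_smul], List.ofFn_succ,
      nestedBracket_cons_of_ne_nil _ (by simp), nestedBracket_ofFn_eq_sum_perm, Ring.lie_def,
      mul_sum, sum_mul, sub_eq_add_neg, ← sum_neg_distrib]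
    congr 1 <;> refine sum_congr rfl fun e _ => ?_
    · rw [piPerm_consZeroPerm, List.ofFn_succ, List.prod_cons, mul_smul_comm]
      simp
    · rw [piPerm_concatZeroPerm, List.ofFn_succ' fun i => x (concatZeroPerm e i),
        List.concat_eq_append, List.prod_append, neg_smul, smul_mul_assoc]
      simp

open scoped Classical in
theorem sum_piPerm_ite_strictMono_eq_zero {p ℓ : ℕ} (hℓ : 2 ≤ ℓ) (hpℓ : p < ℓ)
    (g : Fin p → Fin ℓ) :
    ∑ σ : Perm (Fin ℓ), (if StrictMono (σ.symm ∘ g) then piPerm σ else 0) = 0 := by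
  by_cases hg : Function.Injective g
  swap
  · exact sum_eq_zero fun σ _ => if_neg fun hmono => hg hmono.injective.of_comp
  obtain ⟨n, rfl⟩ : ∃ n, ℓ = n + 1 := ⟨ℓ - 1, by omega⟩
  obtain ⟨a₀, ha₀⟩ : ∃ a, a ∉ Set.range g := by
    by_contra! h
    have := Fintype.card_le_of_surjective g h
    simp only [Fintype.card_fin] at this
    omega
  let x (a : Fin (n + 1)) : MonoidAlgebra ℤ (FreeMonoid (Fin p)) :=
    MonoidAlgebra.of ℤ _ (preimageWord g a)
  have hx₀ : x a₀ = 1 := by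
    have hnone : Function.partialInv g a₀ = none := dif_neg ha₀
    simp only [x, preimageWord, hnone, Option.toList_none, FreeMonoid.ofList_nil, map_one]
  have hvanish : ∑ σ : Perm (Fin (n + 1)), piPerm σ • (List.ofFn fun i => x (σ i)).prod = 0 := by
    rw [← nestedBracket_ofFn_eq_sum_perm]
    refine nestedBracket_eq_zero_of_central_mem (z := 1) (fun y => ?_) ?_
      (by rw [List.length_ofFn]; omega)
    · rw [Ring.lie_def, one_mul, mul_one, sub_self]
    · exact hx₀ ▸ List.mem_ofFn.2 ⟨a₀, rfl⟩
  have hterm (σ : Perm (Fin (n + 1))) :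
      (piPerm σ • (List.ofFn fun i => x (σ i)).prod).coeff (FreeMonoid.ofList (List.finRange p)) =
        if StrictMono (σ.symm ∘ g) then piPerm σ else 0 := by
    rw [show (List.ofFn fun i => x (σ i)).prod =
        MonoidAlgebra.of ℤ _ (List.ofFn fun i => preimageWord g (σ i)).prod by
      rw [map_list_prod, List.map_ofFn]; rfl,
      MonoidAlgebra.coeff_smul_apply, MonoidAlgebra.of_apply, MonoidAlgebra.coeff_single,
      Finsupp.single_apply]
    simp only [prod_preimageWord_eq_iff hg, smul_eq_mul, mul_ite, mul_one, mul_zero]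
  calc ∑ σ : Perm (Fin (n + 1)), (if StrictMono (σ.symm ∘ g) then piPerm σ else 0)
      = (∑ σ : Perm (Fin (n + 1)), piPerm σ • (List.ofFn fun i => x (σ i)).prod).coeff
          (FreeMonoid.ofList (List.finRange p)) := by
        rw [MonoidAlgebra.coeff_sum, Finsupp.finsetSum_apply]
        exact sum_congr rfl fun σ _ => (hterm σ).symm
    _ = 0 := by rw [hvanish, MonoidAlgebra.coeff_zero, Finsupp.zero_apply]

end AssociativeRing

open scoped Classical in
theorem sum_piPerm_smul_sum_strictMono_eq_zero {M : Type*} [AddCommGroup M] {p ℓ : ℕ}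
    (hℓ : 2 ≤ ℓ) (hpℓ : p < ℓ) (T : (Fin p → Fin ℓ) → M) :
    ∑ σ : Perm (Fin ℓ), piPerm σ • ∑ f ∈ univ.filter (StrictMono : (Fin p → Fin ℓ) → Prop),
      T (σ ∘ f) = 0 := by
  calc ∑ σ : Perm (Fin ℓ), piPerm σ • ∑ f ∈ univ.filter (StrictMono : (Fin p → Fin ℓ) → Prop),
        T (σ ∘ f)
      = ∑ σ : Perm (Fin ℓ), ∑ g, (if StrictMono (σ.symm ∘ g) then piPerm σ else 0) • T g := by
        refine sum_congr rfl fun σ _ => ?_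
        rw [sum_filter, smul_sum]
        refine Fintype.sum_bijective (σ ∘ ·) σ.bijective.comp_left _ _ fun f => ?_
        rw [← Function.comp_assoc, Equiv.symm_comp_self, Function.id_comp, ite_smul, zero_smul,
          smul_ite, smul_zero]
    _ = ∑ g, (∑ σ : Perm (Fin ℓ), if StrictMono (σ.symm ∘ g) then piPerm σ else 0) • T g := by
        rw [sum_comm]
        simp only [sum_smul]
    _ = 0 := by simp only [sum_piPerm_ite_strictMono_eq_zero hℓ hpℓ, zero_smul, sum_const_zero]

open scoped Classical in
theorem cancellation_F_ell_p_general {L : Type*} [LieRing L] {m ℓ p q : ℕ}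
    (hℓ : 2 ≤ ℓ) (hpℓ : p ≤ ℓ - 1)
    (b : Fin p → ℕ)
    (X : Fin m → L) (v : Fin ℓ → Fin m) (w : Fin q → Fin m) :
    ∑ σ : Equiv.Perm (Fin ℓ), piPerm σ •
      ∑ f ∈ Finset.univ.filter (fun f : Fin p → Fin ℓ => StrictMono f),
        nestedBracket
          ((((List.finRange p).reverse.map fun j =>
              List.replicate (b j) (X (v (σ (f j))))).flatten) ++
            (List.finRange q).map fun j => X (w j)) = 0 :=
  sum_piPerm_smul_sum_strictMono_eq_zero hℓ (by omega) fun u => nestedBracket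
    ((((List.finRange p).reverse.map fun j => List.replicate (b j) (X (v (u j)))).flatten) ++
      (List.finRange q).map fun j => X (w j))

open scoped Classical in
/-- the cancellation identities `F_{ℓ,p}`:
for `2 ≤ ℓ`, `1 ≤ p ≤ ℓ-1`, a word `v` of length `ℓ`, a nonempty word `w` and
exponents `b₁,…,b_p ≥ 0` with `b₁+⋯+b_p ≥ 1`,
`Σ_{σ ∈ S_ℓ} π_ℓ(σ) Σ_{i₁<⋯<i_p} X_{σ_{i_p}(v)^{b_p} ⋯ σ_{i₁}(v)^{b₁} w} = 0`. -/
theorem cancellation_F_ell_p {L : Type*} [LieRing L] {m ℓ p q : ℕ}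
    (hℓ : 2 ≤ ℓ) (hp : 1 ≤ p) (hpℓ : p ≤ ℓ - 1) (hq : 1 ≤ q)
    (b : Fin p → ℕ) (hb : 1 ≤ ∑ j, b j)
    (X : Fin m → L) (v : Fin ℓ → Fin m) (w : Fin q → Fin m) :
    ∑ σ : Equiv.Perm (Fin ℓ), piPerm σ •
      ∑ f ∈ Finset.univ.filter (fun f : Fin p → Fin ℓ => StrictMono f),
        nestedBracket
          ((((List.finRange p).reverse.map fun j =>
              List.replicate (b j) (X (v (σ (f j))))).flatten) ++
            (List.finRange q).map fun j => X (w j)) = 0 :=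
  cancellation_F_ell_p_general hℓ hpℓ b X v w
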